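/- arXiv:2504.08191 — 6 statements merged into one kernel-verified Lean document; each statement's English description precedes it below -/
import Mathlib

section
/- (Positive invariance, Lemma 1.) Let (x_S, x_I, x_R) be a solution of the controlled SIRI dynamics on [0, T] whose initial condition satisfies x_S(0) ≥ 0, x_I(0) ≥ 0, x_R(0) ≥ 0 and x_S(0) + x_I(0) + x_R(0) = 1. Then for every t ∈ [0, T], the values satisfy x_S(t) ∈ [0, 1], x_I(t) ∈ [0, 1], x_R(t) ∈ [0, 1], and x_S(t) + x_I(t) + x_R(t) = 1. -/
open MeasureTheory Set Filter Topology
open scoped ENNReal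

/-!
Each compartment `x` satisfies `x(t) = x(0) + ∫₀ᵗ g` with `g ≥ -k x` for an essentially bounded
coefficient `k` (for `x_R` this uses `x_S, x_I ≥ 0`, which are proved first). If `x` became
negative at some `t₁`, then on `[t₀, t₁]`, with `t₀` the last time before `t₁` at which `x ≥ 0`,
we would have `|x(t)| ≤ K ∫_{t₀}^t |x|`, and Grönwall's inequality forces `x = 0` there.
The three integrands sum to zero, so `x_S + x_I + x_R` stays equal to `1`; together with
nonnegativity this gives the bounds by `1`.
-/

theorem MeasureTheory.MemLp.exists_ae_norm_le {α E : Type*} [MeasurableSpace α]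
    [NormedAddCommGroup E] {μ : Measure α} {f : α → E} (hf : MemLp f ∞ μ) :
    ∃ C, ∀ᵐ x ∂μ, ‖f x‖ ≤ C := by
  have hfin : eLpNormEssSup f μ ≠ ∞ := eLpNorm_exponent_top (f := f) ▸ hf.eLpNorm_ne_top
  refine ⟨(eLpNormEssSup f μ).toReal, ?_⟩
  filter_upwards [enorm_ae_le_eLpNormEssSup f μ] with x hx
  rw [← toReal_enorm (f x)]
  exact ENNReal.toReal_mono hfin hx

theorem ContinuousOn.memLp_top_Icc {E : Type*} [NormedAddCommGroup E] {f : ℝ → E} {a b : ℝ}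
    (hf : ContinuousOn f (Icc a b)) : MemLp f ∞ (volume.restrict (Icc a b)) := by
  obtain ⟨C, hC⟩ := isCompact_Icc.exists_bound_of_continuousOn hf
  exact memLp_top_of_bound (hf.aestronglyMeasurable measurableSet_Icc) C
    (ae_restrict_of_forall_mem measurableSet_Icc hC)

theorem eq_zero_of_norm_le_mul_integral_norm {E : Type*} [NormedAddCommGroup E]
    {f : ℝ → E} {a b M : ℝ}
    (hf : ContinuousOn f (Icc a b))
    (h : ∀ t ∈ Icc a b, ‖f t‖ ≤ M * ∫ s in a..t, ‖f s‖) :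
    ∀ t ∈ Icc a b, f t = 0 := by
  have hf' : ContinuousOn (fun s => ‖f s‖) (Icc a b) := hf.norm
  set W : ℝ → ℝ := fun t => ∫ s in a..t, ‖f s‖
  have hW : ContinuousOn W (Icc a b) :=
    (intervalIntegral.continuousOn_primitive hf'.integrableOn_Icc).congr fun x hx =>
      intervalIntegral.integral_of_le hx.1
  have hW' : ∀ x ∈ Ico a b, HasDerivWithinAt W ‖f x‖ (Ici x) x := by
    intro x hx
    have hmem : Icc a b ∈ 𝓝[>] x := Icc_mem_nhdsGT_of_mem hx
    exact intervalIntegral.integral_hasDerivWithinAt_right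
      ((hf'.mono (Icc_subset_Icc_right hx.2.le)).intervalIntegrable_of_Icc hx.1)
      ((hf'.stronglyMeasurableAtFilter_nhdsWithin measurableSet_Icc x).filter_mono
        (nhdsWithin_le_of_mem hmem))
      ((hf' x (Ico_subset_Icc_self hx)).mono_of_mem_nhdsWithin hmem)
  have hW0 : ∀ t ∈ Icc a b, W t = 0 :=
    eq_zero_of_abs_deriv_le_mul_abs_self_of_eq_zero_right hW hW' (by simp [W]) fun x hx =>
      calc ‖‖f x‖‖ = ‖f x‖ := norm_norm _
        _ ≤ M * W x := h x (Ico_subset_Icc_self hx)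
        _ ≤ |M| * ‖W x‖ := by rw [Real.norm_eq_abs, ← abs_mul]; exact le_abs_self _
  intro t ht
  have ht' : ‖f t‖ ≤ M * W t := h t ht
  rw [hW0 t ht, mul_zero] at ht'
  exact norm_le_zero_iff.1 ht'

section VectorValued

variable {E : Type*} [NormedAddCommGroup E] [NormedSpace ℝ E] {a b : ℝ}

theorem eq_add_integral_of_Icc_subset {y g : ℝ → E} (hg : IntegrableOn g (Icc a b))
    (heq : ∀ t ∈ Icc a b, y t = y a + ∫ s in a..t, g s) {c d : ℝ} (hac : a ≤ c) (hdb : d ≤ b) :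
    ∀ t ∈ Icc c d, y t = y c + ∫ s in c..t, g s := by
  intro t ht
  have hint : ∀ e ∈ Icc a b, IntervalIntegrable g volume a e := fun e he =>
    (intervalIntegrable_iff_integrableOn_Icc_of_le he.1).2
      (hg.mono_set (Icc_subset_Icc_right he.2))
  have hc : c ∈ Icc a b := ⟨hac, ht.1.trans (ht.2.trans hdb)⟩
  have ht' : t ∈ Icc a b := ⟨hac.trans ht.1, ht.2.trans hdb⟩
  rw [heq t ht', heq c hc, ← intervalIntegral.integral_add_adjacent_intervals (hint c hc)
    ((hint c hc).symm.trans (hint t ht')), add_assoc]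

theorem add_add_eq_of_eq_add_integral {x y z f g h : ℝ → E}
    (hf : IntegrableOn f (Icc a b)) (hg : IntegrableOn g (Icc a b))
    (hh : IntegrableOn h (Icc a b)) (hfgh : ∀ s, f s + g s + h s = 0)
    (hx : ∀ t ∈ Icc a b, x t = x a + ∫ s in a..t, f s)
    (hy : ∀ t ∈ Icc a b, y t = y a + ∫ s in a..t, g s)
    (hz : ∀ t ∈ Icc a b, z t = z a + ∫ s in a..t, h s) :
    ∀ t ∈ Icc a b, x t + y t + z t = x a + y a + z a := by
  intro t ht
  have hint {φ : ℝ → E} (hφ : IntegrableOn φ (Icc a b)) : IntervalIntegrable φ volume a t :=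
    (intervalIntegrable_iff_integrableOn_Icc_of_le ht.1).2
      (hφ.mono_set (Icc_subset_Icc_right ht.2))
  have hsum : (∫ s in a..t, f s) + (∫ s in a..t, g s) + ∫ s in a..t, h s = 0 := by
    rw [← intervalIntegral.integral_add (hint hf) (hint hg),
      ← intervalIntegral.integral_add ((hint hf).add (hint hg)) (hint hh)]
    simp [hfgh]
  rw [hx t ht, hy t ht, hz t ht, ← add_zero (x a + y a + z a), ← hsum]
  abel

end VectorValued

section LinearDifferentialInequality

variable {y g : ℝ → ℝ} {a b : ℝ}

theorem eq_zero_of_nonpos_of_eq_add_integral {K : ℝ}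
    (hy : ContinuousOn y (Icc a b)) (hg : IntegrableOn g (Icc a b))
    (hgy : ∀ᵐ s ∂volume.restrict (Icc a b), -g s ≤ K * |y s|)
    (heq : ∀ t ∈ Icc a b, y t = y a + ∫ s in a..t, g s) (ha : 0 ≤ y a)
    (hnonpos : ∀ t ∈ Icc a b, y t ≤ 0) :
    ∀ t ∈ Icc a b, y t = 0 := by
  refine eq_zero_of_norm_le_mul_integral_norm (M := K) hy fun t ht => ?_
  have hsub : Icc a t ⊆ Icc a b := Icc_subset_Icc_right ht.2
  simp only [Real.norm_eq_abs]
  calc |y t| = -y t := abs_of_nonpos (hnonpos t ht)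
    _ ≤ ∫ s in a..t, -g s := by rw [heq t ht, intervalIntegral.integral_neg]; linarith
    _ ≤ ∫ s in a..t, K * |y s| :=
        intervalIntegral.integral_mono_ae_restrict ht.1
          ((intervalIntegrable_iff_integrableOn_Icc_of_le ht.1).2 (hg.mono_set hsub)).neg
          (((hy.mono hsub).abs.const_mul K).intervalIntegrable_of_Icc ht.1)
          (ae_restrict_of_ae_restrict_of_subset hsub hgy)
    _ = K * ∫ s in a..t, |y s| := intervalIntegral.integral_const_mul _ _

theorem nonneg_of_eq_add_integral_of_neg_le {K : ℝ}
    (hy : ContinuousOn y (Icc a b)) (hg : IntegrableOn g (Icc a b))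
    (hgy : ∀ᵐ s ∂volume.restrict (Icc a b), -g s ≤ K * |y s|)
    (heq : ∀ t ∈ Icc a b, y t = y a + ∫ s in a..t, g s) (ha : 0 ≤ y a) :
    ∀ t ∈ Icc a b, 0 ≤ y t := by
  by_contra! ⟨t₁, ht₁, hneg⟩
  have hsub₁ : Icc a t₁ ⊆ Icc a b := Icc_subset_Icc_right ht₁.2
  have hS : IsCompact (Icc a t₁ ∩ y ⁻¹' Ici 0) := isCompact_Icc.of_isClosed_subset
    ((hy.mono hsub₁).preimage_isClosed_of_isClosed isClosed_Icc isClosed_Ici) inter_subset_left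
  obtain ⟨t₀, ⟨ht₀, hy₀⟩, hlast⟩ := hS.exists_isGreatest ⟨a, ⟨left_mem_Icc.2 ht₁.1, ha⟩⟩
  have hlt : t₀ < t₁ := ht₀.2.lt_of_ne fun h => (h ▸ hneg).not_ge hy₀
  have hsub₀ : Icc t₀ t₁ ⊆ Icc a b := Icc_subset_Icc ht₀.1 ht₁.2
  have hnonpos : ∀ t ∈ Icc t₀ t₁, y t ≤ 0 := by
    have hclosed : IsClosed (Icc t₀ t₁ ∩ y ⁻¹' Iic 0) :=
      (hy.mono hsub₀).preimage_isClosed_of_isClosed isClosed_Icc isClosed_Iic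
    have hIoc : Ioc t₀ t₁ ⊆ Icc t₀ t₁ ∩ y ⁻¹' Iic 0 := fun t ht =>
      ⟨Ioc_subset_Icc_self ht, (le_of_not_ge fun h =>
        ht.1.not_ge (hlast ⟨⟨ht₀.1.trans ht.1.le, ht.2⟩, h⟩) : y t ≤ 0)⟩
    intro t ht
    rw [← closure_Ioc hlt.ne] at ht
    exact (hclosed.closure_subset_iff.2 hIoc ht).2
  have hzero := eq_zero_of_nonpos_of_eq_add_integral (hy.mono hsub₀) (hg.mono_set hsub₀)
    (ae_restrict_of_ae_restrict_of_subset hsub₀ hgy)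
    (eq_add_integral_of_Icc_subset hg heq ht₀.1 ht₁.2) hy₀ hnonpos t₁ ⟨hlt.le, le_rfl⟩
  exact hneg.ne hzero

theorem nonneg_of_eq_add_integral {k : ℝ → ℝ}
    (hy : ContinuousOn y (Icc a b)) (hg : IntegrableOn g (Icc a b))
    (hk : MemLp k ∞ (volume.restrict (Icc a b)))
    (hgk : ∀ᵐ s ∂volume.restrict (Icc a b), -(k s * y s) ≤ g s)
    (heq : ∀ t ∈ Icc a b, y t = y a + ∫ s in a..t, g s) (ha : 0 ≤ y a) :
    ∀ t ∈ Icc a b, 0 ≤ y t := by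
  obtain ⟨K, hK⟩ := hk.exists_ae_norm_le
  refine nonneg_of_eq_add_integral_of_neg_le (K := K) hy hg ?_ heq ha
  filter_upwards [hK, hgk] with s hKs hs
  calc -g s ≤ |k s * y s| := by linarith [le_abs_self (k s * y s)]
    _ ≤ K * |y s| := by rw [abs_mul, ← Real.norm_eq_abs (k s)]; gcongr

end LinearDifferentialInequality

theorem siri_positive_invariance_general
    (β βh γ uPmin uVmax T : ℝ)
    (hγ : 0 < γ)
    (huPmin0 : 0 < uPmin)
    (uP uV : ℝ → ℝ)
    (huPmeas : Measurable uP) (huVmeas : Measurable uV)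
    (huP : ∀ᵐ t ∂(volume.restrict (Icc (0:ℝ) T)), uP t ∈ Icc uPmin 1)
    (huV : ∀ᵐ t ∂(volume.restrict (Icc (0:ℝ) T)), uV t ∈ Icc (0:ℝ) uVmax)
    (xS xI xR : ℝ → ℝ)
    (hxS : ContinuousOn xS (Icc 0 T)) (hxI : ContinuousOn xI (Icc 0 T))
    (hxR : ContinuousOn xR (Icc 0 T))
    (heqS : ∀ t ∈ Icc (0:ℝ) T,
      xS t = xS 0 + ∫ s in (0:ℝ)..t, (-(β * xS s * xI s * uP s) - xS s * uV s))
    (heqI : ∀ t ∈ Icc (0:ℝ) T,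
      xI t = xI 0 + ∫ s in (0:ℝ)..t,
        (β * xS s * xI s * uP s + βh * xR s * xI s * uP s - γ * xI s))
    (heqR : ∀ t ∈ Icc (0:ℝ) T,
      xR t = xR 0 + ∫ s in (0:ℝ)..t,
        (-(βh * xR s * xI s * uP s) + xS s * uV s + γ * xI s))
    (hS0 : 0 ≤ xS 0) (hI0 : 0 ≤ xI 0) (hR0 : 0 ≤ xR 0)
    (hsum0 : xS 0 + xI 0 + xR 0 = 1) :
    ∀ t ∈ Icc (0:ℝ) T,
      xS t ∈ Icc (0:ℝ) 1 ∧ xI t ∈ Icc (0:ℝ) 1 ∧ xR t ∈ Icc (0:ℝ) 1 ∧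
      xS t + xI t + xR t = 1 := by
  set μ := volume.restrict (Icc (0:ℝ) T)
  -- `MemLp.mul'` with its Hölder exponents pinned to `∞`, which elaboration cannot infer
  have hmul {f φ : ℝ → ℝ} (hf : MemLp f ∞ μ) (hφ : MemLp φ ∞ μ) :
      MemLp (fun s => φ s * f s) ∞ μ := hf.mul' hφ
  have hS := hxS.memLp_top_Icc
  have hI := hxI.memLp_top_Icc
  have hR := hxR.memLp_top_Icc
  have hP : MemLp uP ∞ μ := memLp_top_of_bound huPmeas.aestronglyMeasurable 1 <|
    huP.mono fun s hs => abs_le.2 ⟨by linarith [hs.1], hs.2⟩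
  have hV : MemLp uV ∞ μ := memLp_top_of_bound huVmeas.aestronglyMeasurable uVmax <|
    huV.mono fun s hs => abs_le.2 ⟨by linarith [hs.1, hs.2], hs.2⟩
  have hSIP := hmul hP (hmul hI (hS.const_mul β))
  have hRIP := hmul hP (hmul hI (hR.const_mul βh))
  have hgS : IntegrableOn (fun s => -(β * xS s * xI s * uP s) - xS s * uV s) (Icc 0 T) :=
    (hSIP.neg.sub (hmul hV hS)).integrable le_top
  have hgI : IntegrableOn
      (fun s => β * xS s * xI s * uP s + βh * xR s * xI s * uP s - γ * xI s) (Icc 0 T) :=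
    ((hSIP.add hRIP).sub (hI.const_mul γ)).integrable le_top
  have hgR : IntegrableOn
      (fun s => -(βh * xR s * xI s * uP s) + xS s * uV s + γ * xI s) (Icc 0 T) :=
    ((hRIP.neg.add (hmul hV hS)).add (hI.const_mul γ)).integrable le_top
  have hS_nonneg := nonneg_of_eq_add_integral hxS hgS
    (k := fun s => β * xI s * uP s + uV s) ((hmul hP (hI.const_mul β)).add hV)
    (ae_of_all _ fun s => le_of_eq (by ring)) heqS hS0
  have hI_nonneg := nonneg_of_eq_add_integral hxI hgI
    (k := fun s => -((β * xS s + βh * xR s) * uP s) + γ)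
    ((hmul hP ((hS.const_mul β).add (hR.const_mul βh))).neg.add (memLp_const γ))
    (ae_of_all _ fun s => le_of_eq (by ring)) heqI hI0
  have hR_nonneg := nonneg_of_eq_add_integral hxR hgR
    (k := fun s => βh * xI s * uP s) (hmul hP (hI.const_mul βh))
    (by
      filter_upwards [huV, ae_restrict_mem measurableSet_Icc] with s hs hsT
      linarith [mul_nonneg (hS_nonneg s hsT) hs.1, mul_nonneg hγ.le (hI_nonneg s hsT)])
    heqR hR0
  have hsum := add_add_eq_of_eq_add_integral hgS hgI hgR (fun s => by ring) heqS heqI heqR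
  intro t ht
  refine ⟨⟨?_, ?_⟩, ⟨?_, ?_⟩, ⟨?_, ?_⟩, ?_⟩ <;>
    linarith [hS_nonneg t ht, hI_nonneg t ht, hR_nonneg t ht, hsum t ht]

theorem siri_positive_invariance
    (β βh γ uPmin uVmax T : ℝ)
    (hβ : 0 < β) (hβh : 0 < βh) (hγ : 0 < γ)
    (huPmin0 : 0 < uPmin) (huPmin1 : uPmin ≤ 1)
    (huVmax0 : 0 ≤ uVmax) (huVmax1 : uVmax < 1)
    (hT : 0 < T)
    (uP uV : ℝ → ℝ)
    (huPmeas : Measurable uP) (huVmeas : Measurable uV)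
    (huP : ∀ᵐ t ∂(volume.restrict (Icc (0:ℝ) T)), uP t ∈ Icc uPmin 1)
    (huV : ∀ᵐ t ∂(volume.restrict (Icc (0:ℝ) T)), uV t ∈ Icc (0:ℝ) uVmax)
    (xS xI xR : ℝ → ℝ)
    (hxS : ContinuousOn xS (Icc 0 T)) (hxI : ContinuousOn xI (Icc 0 T))
    (hxR : ContinuousOn xR (Icc 0 T))
    (heqS : ∀ t ∈ Icc (0:ℝ) T,
      xS t = xS 0 + ∫ s in (0:ℝ)..t, (-(β * xS s * xI s * uP s) - xS s * uV s))
    (heqI : ∀ t ∈ Icc (0:ℝ) T,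
      xI t = xI 0 + ∫ s in (0:ℝ)..t,
        (β * xS s * xI s * uP s + βh * xR s * xI s * uP s - γ * xI s))
    (heqR : ∀ t ∈ Icc (0:ℝ) T,
      xR t = xR 0 + ∫ s in (0:ℝ)..t,
        (-(βh * xR s * xI s * uP s) + xS s * uV s + γ * xI s))
    (hS0 : 0 ≤ xS 0) (hI0 : 0 ≤ xI 0) (hR0 : 0 ≤ xR 0)
    (hsum0 : xS 0 + xI 0 + xR 0 = 1) :
    ∀ t ∈ Icc (0:ℝ) T,
      xS t ∈ Icc (0:ℝ) 1 ∧ xI t ∈ Icc (0:ℝ) 1 ∧ xR t ∈ Icc (0:ℝ) 1 ∧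
      xS t + xI t + xR t = 1 :=
  siri_positive_invariance_general β βh γ uPmin uVmax T hγ huPmin0 uP uV huPmeas huVmeas huP huV xS
    xI xR hxS hxI hxR heqS heqI heqR hS0 hI0 hR0 hsum0
end

section
/- For every z ∈ ℝ³, the Lie bracket of f with g_V vanishes: [f, g_V](z) = (0, 0, 0). -/
noncomputable section

def fVec (cP cI γ : ℝ) (z : ℝ × ℝ × ℝ) : ℝ × ℝ × ℝ :=
  (cP * (z.2.1 + z.2.2) + cI * (1 - z.2.1 - z.2.2), 0, γ * (1 - z.2.1 - z.2.2))

def gPVec (β βh cP : ℝ) (z : ℝ × ℝ × ℝ) : ℝ × ℝ × ℝ :=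
  (-(cP * (z.2.1 + z.2.2)), -(β * z.2.1 * (1 - z.2.1 - z.2.2)),
    -(βh * z.2.2 * (1 - z.2.1 - z.2.2)))

def gVVec (cV : ℝ) (z : ℝ × ℝ × ℝ) : ℝ × ℝ × ℝ := (cV * z.2.1, -z.2.1, z.2.1)

def lieBr (X Y : ℝ × ℝ × ℝ → ℝ × ℝ × ℝ) (z : ℝ × ℝ × ℝ) : ℝ × ℝ × ℝ :=
  fderiv ℝ Y z (X z) - fderiv ℝ X z (Y z)

/-!
`f` is affine and `g_V` is linear, so `[f, g_V](z) = D g_V (f z) - D f (g_V z)` with constant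
derivatives. `D g_V` only reads the `x_S`-component, which `f` never has; `D f` only reads
`x_S + x_R`, which vanishes along `g_V z = x_S • (c_V, -1, 1)`. Both terms are zero.
-/

namespace SIRI

open ContinuousLinearMap

def coordS : (ℝ × ℝ × ℝ) →L[ℝ] ℝ := (fst ℝ ℝ ℝ).comp (snd ℝ ℝ (ℝ × ℝ))

def coordR : (ℝ × ℝ × ℝ) →L[ℝ] ℝ := (snd ℝ ℝ ℝ).comp (snd ℝ ℝ (ℝ × ℝ))

@[simp] lemma coordS_apply (z : ℝ × ℝ × ℝ) : coordS z = z.2.1 := rfl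

@[simp] lemma coordR_apply (z : ℝ × ℝ × ℝ) : coordR z = z.2.2 := rfl

def gVLinear (cV : ℝ) : (ℝ × ℝ × ℝ) →L[ℝ] ℝ × ℝ × ℝ :=
  (cV • coordS).prod ((-coordS).prod coordS)

def fLinear (cP cI γ : ℝ) : (ℝ × ℝ × ℝ) →L[ℝ] ℝ × ℝ × ℝ :=
  ((cP - cI) • (coordS + coordR)).prod
    ((0 : (ℝ × ℝ × ℝ) →L[ℝ] ℝ).prod (-γ • (coordS + coordR)))

lemma gVVec_eq_gVLinear (cV : ℝ) : gVVec cV = gVLinear cV := by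
  ext z <;> simp [gVVec, gVLinear]

lemma fVec_eq_const_add_fLinear (cP cI γ : ℝ) :
    fVec cP cI γ = fun z => (cI, 0, γ) + fLinear cP cI γ z := by
  ext z <;> simp [fVec, fLinear] <;> ring

lemma fderiv_gVVec (cV : ℝ) (z : ℝ × ℝ × ℝ) : fderiv ℝ (gVVec cV) z = gVLinear cV := by
  rw [gVVec_eq_gVLinear, ContinuousLinearMap.fderiv]

lemma fderiv_fVec (cP cI γ : ℝ) (z : ℝ × ℝ × ℝ) :
    fderiv ℝ (fVec cP cI γ) z = fLinear cP cI γ := by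
  rw [fVec_eq_const_add_fLinear, fderiv_const_add, ContinuousLinearMap.fderiv]

lemma gVLinear_fVec (cV cP cI γ : ℝ) (z : ℝ × ℝ × ℝ) : gVLinear cV (fVec cP cI γ z) = 0 := by
  ext <;> simp [gVLinear, fVec]

lemma fLinear_gVVec (cP cI γ cV : ℝ) (z : ℝ × ℝ × ℝ) : fLinear cP cI γ (gVVec cV z) = 0 := by
  ext <;> simp [fLinear, gVVec]

end SIRI

open SIRI in
theorem siri_lie_f_gV_zero_general
    (γ cP cV cI : ℝ) :
    ∀ z : ℝ × ℝ × ℝ, lieBr (fVec cP cI γ) (gVVec cV) z = (0, 0, 0) := by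
  intro z
  rw [lieBr, fderiv_fVec, fderiv_gVVec, gVLinear_fVec, fLinear_gVVec, sub_zero]
  rfl

/-- the Lie bracket of the drift `f` with `g_V` vanishes. -/
theorem siri_lie_f_gV_zero
    (β βh γ cP cV cI : ℝ)
    (hβ : 0 < β) (hβh : 0 < βh) (hγ : 0 < γ)
    (hcP : 0 < cP) (hcV : 0 < cV) (hcI : 0 < cI) :
    ∀ z : ℝ × ℝ × ℝ, lieBr (fVec cP cI γ) (gVVec cV) z = (0, 0, 0) :=
  siri_lie_f_gV_zero_general γ cP cV cI
end
end

section
/- For every z = (x_C, x_S, x_R) ∈ ℝ³, the Lie bracket of g_P with g_V is given explicitly by [g_P, g_V](z) = (−β c_V x_S (1 − x_S − x_R), 0, −(β − β̂) x_S (1 − x_S − x_R)). -/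
noncomputable section

/-!
Since `g_V` is linear, `D g_V(z) g_P(z) = g_V(g_P(z))`. The direction `g_V(z) = (c_V x_S, -x_S, x_S)`
leaves `x_S + x_R` unchanged, so along it only the factors `x_S`, `x_R` of `g_P` vary and
`D g_P(z) g_V(z) = (0, β x_S w, -β̂ x_S w)` with `w = 1 - x_S - x_R`.
-/

namespace SiriLie

def gVVecCLM (cV : ℝ) : (ℝ × ℝ × ℝ) →L[ℝ] ℝ × ℝ × ℝ :=
  let s : (ℝ × ℝ × ℝ) →L[ℝ] ℝ :=
    (ContinuousLinearMap.fst ℝ ℝ ℝ).comp (ContinuousLinearMap.snd ℝ ℝ (ℝ × ℝ))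
  (cV • s).prod ((-s).prod s)

@[simp]
theorem coe_gVVecCLM (cV : ℝ) : ⇑(gVVecCLM cV) = gVVec cV := by
  ext z <;> simp [gVVecCLM, gVVec]

theorem fderiv_gVVec (cV : ℝ) (z : ℝ × ℝ × ℝ) : fderiv ℝ (gVVec cV) z = gVVecCLM cV := by
  rw [← coe_gVVecCLM, ContinuousLinearMap.fderiv]

theorem fderiv_gPVec_apply (β βh cP : ℝ) (z v : ℝ × ℝ × ℝ) :
    fderiv ℝ (gPVec β βh cP) z v =
      (-(cP * (v.2.1 + v.2.2)),
        -(β * (v.2.1 * (1 - z.2.1 - z.2.2) - z.2.1 * (v.2.1 + v.2.2))),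
        -(βh * (v.2.2 * (1 - z.2.1 - z.2.2) - z.2.2 * (v.2.1 + v.2.2)))) := by
  have hS : HasFDerivAt (fun z : ℝ × ℝ × ℝ => z.2.1) _ z :=
    (hasFDerivAt_snd (𝕜 := ℝ) (p := z)).fst
  have hR : HasFDerivAt (fun z : ℝ × ℝ × ℝ => z.2.2) _ z :=
    (hasFDerivAt_snd (𝕜 := ℝ) (p := z)).snd
  have hW := ((hasFDerivAt_const (1 : ℝ) z).sub hS).sub hR
  have hgP : HasFDerivAt (gPVec β βh cP) _ z :=
    ((hS.add hR).const_mul cP).neg.prodMk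
      (((hS.const_mul β).mul hW).neg.prodMk ((hR.const_mul βh).mul hW).neg)
  rw [hgP.fderiv]
  ext <;> simp <;> ring

theorem fderiv_gPVec_apply_gVVec (β βh cP cV : ℝ) (z : ℝ × ℝ × ℝ) :
    fderiv ℝ (gPVec β βh cP) z (gVVec cV z) =
      (0, β * z.2.1 * (1 - z.2.1 - z.2.2), -(βh * z.2.1 * (1 - z.2.1 - z.2.2))) := by
  rw [fderiv_gPVec_apply]
  ext <;> simp [gVVec] <;> ring

end SiriLie

open SiriLie in
theorem siri_lie_gP_gV_general
    (β βh cP cV : ℝ) :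
    ∀ z : ℝ × ℝ × ℝ,
      lieBr (gPVec β βh cP) (gVVec cV) z =
        (-(β * cV * z.2.1 * (1 - z.2.1 - z.2.2)), 0,
          -((β - βh) * z.2.1 * (1 - z.2.1 - z.2.2))) := by
  intro z
  rw [lieBr, fderiv_gVVec, coe_gVVecCLM, fderiv_gPVec_apply_gVVec]
  ext <;> simp [gVVec, gPVec] <;> ring

/-- explicit formula for `[g_P, g_V]`. -/
theorem siri_lie_gP_gV
    (β βh γ cP cV cI : ℝ)
    (hβ : 0 < β) (hβh : 0 < βh) (hγ : 0 < γ)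
    (hcP : 0 < cP) (hcV : 0 < cV) (hcI : 0 < cI) :
    ∀ z : ℝ × ℝ × ℝ,
      lieBr (gPVec β βh cP) (gVVec cV) z =
        (-(β * cV * z.2.1 * (1 - z.2.1 - z.2.2)), 0,
          -((β - βh) * z.2.1 * (1 - z.2.1 - z.2.2))) :=
  siri_lie_gP_gV_general β βh cP cV
end
end

section
/- (Key determinant computation in Proposition 2.) Suppose β̂ > β > 0, c_P > 0, c_V > 0, and let z = (x_C, x_S, x_R) ∈ ℝ³ satisfy x_S > 0, x_R ≥ 0 and 0 < 1 − x_S − x_R. Then for every u_P > 0, the three vectors g_V(z), g_P(z), and u_P · [g_P, g_V](z) are linearly independent in ℝ³; equivalently, the determinant of the 3 × 3 matrix with these columns is nonzero. -/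
noncomputable section

/-! With `x_I = 1 - x_S - x_R`, the bracket `[g_P, g_V](z)` is `x_S x_I (-β c_V, 0, β̂ - β)`, and the
determinant of `g_V(z), g_P(z), u_P [g_P, g_V](z)` factorises as
`-u_P x_S² x_I (x_S + x_R) (β β̂ c_V x_I + c_P (β̂ - β))`, a product of positive factors when
`β̂ > β > 0`. -/

section Coordinates

variable {R : Type*} [CommRing R]

def coordsFin3 : R × R × R →ₗ[R] Fin 3 → R :=
  LinearMap.pi ![LinearMap.fst R R (R × R), (LinearMap.fst R R R).comp (LinearMap.snd R R (R × R)),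
    (LinearMap.snd R R R).comp (LinearMap.snd R R (R × R))]

theorem linearIndependent_of_det_coordsFin3_ne_zero [IsDomain R] {v : Fin 3 → R × R × R}
    (h : (Matrix.of fun i => coordsFin3 (v i)).det ≠ 0) : LinearIndependent R v :=
  LinearIndependent.of_comp coordsFin3 (Matrix.linearIndependent_rows_of_det_ne_zero h)

end Coordinates

section VectorFields

variable (β βh cP cV : ℝ) (z v : ℝ × ℝ × ℝ)

theorem fderiv_gVVec_apply : fderiv ℝ (gVVec cV) z v = gVVec cV v := by
  have xS := (hasFDerivAt_snd (𝕜 := ℝ) (p := z)).fst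
  have h : HasFDerivAt (gVVec cV) _ z := (xS.const_mul cV).prodMk (xS.neg.prodMk xS)
  rw [h.fderiv]
  rfl

theorem fderiv_gPVec_apply : fderiv ℝ (gPVec β βh cP) z v =
    (-(cP * (v.2.1 + v.2.2)),
      -(β * (v.2.1 * (1 - z.2.1 - z.2.2) - z.2.1 * (v.2.1 + v.2.2))),
      -(βh * (v.2.2 * (1 - z.2.1 - z.2.2) - z.2.2 * (v.2.1 + v.2.2)))) := by
  have xS := (hasFDerivAt_snd (𝕜 := ℝ) (p := z)).fst
  have xR := (hasFDerivAt_snd (𝕜 := ℝ) (p := z)).snd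
  have xI := ((hasFDerivAt_const (1 : ℝ) z).sub xS).sub xR
  have h : HasFDerivAt (gPVec β βh cP) _ z := ((xS.add xR).const_mul cP).neg.prodMk
    (((xS.const_mul β).mul xI).neg.prodMk ((xR.const_mul βh).mul xI).neg)
  rw [h.fderiv]
  simp only [ContinuousLinearMap.prod_apply, ContinuousLinearMap.comp_apply, add_apply, sub_apply,
    neg_apply, smul_apply, ContinuousLinearMap.coe_fst', ContinuousLinearMap.coe_snd', Pi.sub_apply,
    smul_add, neg_add_rev, zero_sub, smul_eq_mul, Prod.mk.injEq]
  exact ⟨by ring, by ring, by ring⟩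

theorem lieBr_gPVec_gVVec : lieBr (gPVec β βh cP) (gVVec cV) z =
    (z.2.1 * (1 - z.2.1 - z.2.2)) • (-(β * cV), 0, βh - β) := by
  rw [lieBr, fderiv_gVVec_apply, fderiv_gPVec_apply]
  simp only [gPVec, gVVec, Prod.smul_mk, smul_eq_mul, Prod.mk_sub_mk]
  ext <;> simp only <;> ring

end VectorFields

theorem det_gVVec_gPVec_lieBr (β βh cP cV uP : ℝ) (z : ℝ × ℝ × ℝ) :
    (Matrix.of fun i => coordsFin3
      (![gVVec cV z, gPVec β βh cP z, uP • lieBr (gPVec β βh cP) (gVVec cV) z] i)).det =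
    -(uP * z.2.1 ^ 2 * (1 - z.2.1 - z.2.2) * (z.2.1 + z.2.2) *
      (β * βh * cV * (1 - z.2.1 - z.2.2) + cP * (βh - β))) := by
  rw [Matrix.det_fin_three, lieBr_gPVec_gVVec]
  simp only [coordsFin3, gVVec, gPVec, Prod.smul_mk, smul_eq_mul, Matrix.of_apply,
    Matrix.cons_val_zero, Matrix.cons_val_one, Matrix.cons_val, LinearMap.pi_apply,
    LinearMap.fst_apply, LinearMap.coe_comp, LinearMap.coe_fst, LinearMap.coe_snd,
    Function.comp_apply]
  ring

theorem siri_three_vectors_linear_independent_general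
    (β βh cP cV : ℝ)
    (hβ : 0 < β) (hβhβ : β < βh)
    (hcP : 0 < cP) (hcV : 0 < cV)
    (z : ℝ × ℝ × ℝ) (hxS : 0 < z.2.1) (hxR : 0 ≤ z.2.2)
    (hxI : 0 < 1 - z.2.1 - z.2.2)
    (uP : ℝ) (huP : 0 < uP) :
    LinearIndependent ℝ
      ![gVVec cV z, gPVec β βh cP z, uP • lieBr (gPVec β βh cP) (gVVec cV) z] := by
  refine linearIndependent_of_det_coordsFin3_ne_zero ?_
  rw [det_gVVec_gPVec_lieBr, neg_ne_zero]
  have hsum : 0 < z.2.1 + z.2.2 := by linarith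
  have hgap : 0 < βh - β := sub_pos.2 hβhβ
  have hβh : 0 < βh := hβ.trans hβhβ
  positivity

/-- key determinant computation in Proposition 2: under compromised
immunity the vectors `g_V(z)`, `g_P(z)` and `u_P • [g_P, g_V](z)` are linearly
independent. -/
theorem siri_three_vectors_linear_independent
    (β βh γ cP cV cI : ℝ)
    (hβ : 0 < β) (hβhβ : β < βh) (hγ : 0 < γ)
    (hcP : 0 < cP) (hcV : 0 < cV) (hcI : 0 < cI)
    (z : ℝ × ℝ × ℝ) (hxS : 0 < z.2.1) (hxR : 0 ≤ z.2.2)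
    (hxI : 0 < 1 - z.2.1 - z.2.2)
    (uP : ℝ) (huP : 0 < uP) :
    LinearIndependent ℝ
      ![gVVec cV z, gPVec β βh cP z, uP • lieBr (gPVec β βh cP) (gVVec cV) z] :=
  siri_three_vectors_linear_independent_general β βh cP cV hβ hβhβ hcP hcV z hxS hxR hxI uP huP
end
end

section
/- (Exclusion of bang values for a singular arc, core of Theorem 3.) Let β, β̂, γ, c_P, c_V, c_I > 0 and 0 < u_Pmin ≤ 1 satisfy β̂ > β, (β̂ − β)(c_I − c_P) + β c_V γ ≠ 0, (β − β̂) c_I + β β̂ c_V − β c_V γ < 0, and (β − β̂)(c_I − c_P (1 − u_Pmin)) + β β̂ c_V u_Pmin < 0. For z = (x_C, x_S, x_R) ∈ ℝ³ define κ(z) = ((β̂ − β) c_P + β β̂ c_V (1 − 2 x_S − 2 x_R)) / ((β̂ − β)(c_I − c_P) + β c_V γ). Then for every z with x_S ≥ 0, x_R ≥ 0 and x_S + x_R ≤ 1, one has κ(z) ≠ −1 and κ(z) ≠ −1/u_Pmin. -/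
/-- exclusion of bang values for a singular arc, core of Theorem 3:
under Assumptions 1 and 2, the coefficient `κ(z)` never equals `−1` nor
`−1/u_Pmin` on the state simplex. -/
theorem siri_kappa_excludes_bang_values
    (β βh γ cP cV cI uPmin : ℝ)
    (hβ : 0 < β) (hβh : 0 < βh) (hγ : 0 < γ)
    (hcP : 0 < cP) (hcV : 0 < cV) (hcI : 0 < cI)
    (huPmin0 : 0 < uPmin) (huPmin1 : uPmin ≤ 1)
    (hcomp : β < βh)
    (hA1 : (βh - β) * (cI - cP) + β * cV * γ ≠ 0)
    (hA2 : (β - βh) * cI + β * βh * cV - β * cV * γ < 0)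
    (hA3 : (β - βh) * (cI - cP * (1 - uPmin)) + β * βh * cV * uPmin < 0) :
    ∀ z : ℝ × ℝ × ℝ, 0 ≤ z.2.1 → 0 ≤ z.2.2 → z.2.1 + z.2.2 ≤ 1 →
      (((βh - β) * cP + β * βh * cV * (1 - 2 * z.2.1 - 2 * z.2.2)) /
          ((βh - β) * (cI - cP) + β * cV * γ) ≠ -1) ∧
      (((βh - β) * cP + β * βh * cV * (1 - 2 * z.2.1 - 2 * z.2.2)) /
          ((βh - β) * (cI - cP) + β * cV * γ) ≠ -(1 / uPmin)) := by
  intro z hS hR hsum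
  have hbbc : (0:ℝ) ≤ β * βh * cV * (2 - 2 * z.2.1 - 2 * z.2.2) :=
    mul_nonneg (mul_pos (mul_pos hβ hβh) hcV).le (by linarith)
  constructor
  · intro h
    rw [div_eq_iff hA1] at h
    nlinarith [h, hbbc]
  · intro h
    rw [div_eq_iff hA1] at h
    have h' : uPmin * ((βh - β) * cP + β * βh * cV * (1 - 2 * z.2.1 - 2 * z.2.2))
        = -((βh - β) * (cI - cP) + β * cV * γ) := by
      field_simp at h
      linarith [h]
    nlinarith [h', mul_nonneg huPmin0.le hbbc, mul_pos (mul_pos hβ hcV) hγ]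
end

section
/- (Derivative of the vaccination switching function.) Fix real numbers u_P, u_V, and let z : ℝ → ℝ³ and λ : ℝ → ℝ³ be functions such that at some time t₀, z has derivative f(z(t₀)) + u_P · g_P(z(t₀)) + u_V · g_V(z(t₀)) and λ has derivative −(Df(z(t₀)) + u_P · Dg_P(z(t₀)) + u_V · Dg_V(z(t₀)))ᵀ λ(t₀), where ᵀ denotes the adjoint (transpose) with respect to the standard inner product ⟨·,·⟩ on ℝ³. Then the function t ↦ ⟨λ(t), g_V(z(t))⟩ is differentiable at t₀ with derivative equal to u_P · ⟨λ(t₀), [g_P, g_V](z(t₀))⟩. -/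
/-! Along `ż = F(z)` with co-state `λ̇ = -DF(z)ᵀλ`, the product rule gives
`d/dt ⟨λ, g(z)⟩ = ⟨λ, Dg(z) F(z)⟩ - ⟨λ, DF(z) g(z)⟩ = ⟨λ, [F, g](z)⟩`. For
`F = f + u_P g_P + u_V g_V` and `g = g_V`, the bracket is linear in `F`, and `[f, g_V]`
and `[g_V, g_V]` vanish. -/

noncomputable section

/-- Standard inner product on `ℝ³ = ℝ × ℝ × ℝ`. -/
def dot3 (a b : ℝ × ℝ × ℝ) : ℝ := a.1 * b.1 + a.2.1 * b.2.1 + a.2.2 * b.2.2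

lemma dot3_sub_right (a b c : ℝ × ℝ × ℝ) : dot3 a (b - c) = dot3 a b - dot3 a c := by
  simp only [dot3, Prod.fst_sub, Prod.snd_sub]; ring

lemma dot3_smul_right (a b : ℝ × ℝ × ℝ) (c : ℝ) : dot3 a (c • b) = c * dot3 a b := by
  simp only [dot3, Prod.smul_fst, Prod.smul_snd, smul_eq_mul]; ring

theorem HasDerivAt.dot3 {a b : ℝ → ℝ × ℝ × ℝ} {a' b' : ℝ × ℝ × ℝ} {t : ℝ}
    (ha : HasDerivAt a a' t) (hb : HasDerivAt b b' t) :
    HasDerivAt (fun s => dot3 (a s) (b s)) (dot3 a' (b t) + dot3 (a t) b') t := by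
  have ha₁ : HasDerivAt (fun s => (a s).1) a'.1 t := ha.fst
  have ha₂ : HasDerivAt (fun s => (a s).2.1) a'.2.1 t := ha.snd.fst
  have ha₃ : HasDerivAt (fun s => (a s).2.2) a'.2.2 t := ha.snd.snd
  have hb₁ : HasDerivAt (fun s => (b s).1) b'.1 t := hb.fst
  have hb₂ : HasDerivAt (fun s => (b s).2.1) b'.2.1 t := hb.snd.fst
  have hb₃ : HasDerivAt (fun s => (b s).2.2) b'.2.2 t := hb.snd.snd
  refine (((ha₁.mul hb₁).add (ha₂.mul hb₂)).add (ha₃.mul hb₃)).congr_deriv ?_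
  simp only [_root_.dot3]; ring

section LieBracket

variable {X Y W : ℝ × ℝ × ℝ → ℝ × ℝ × ℝ} {z : ℝ × ℝ × ℝ}

lemma lieBr_self : lieBr X X z = 0 := sub_self _

lemma lieBr_add_left (hX : DifferentiableAt ℝ X z) (hY : DifferentiableAt ℝ Y z) :
    lieBr (X + Y) W z = lieBr X W z + lieBr Y W z := by
  simp only [lieBr, fderiv_add hX hY, Pi.add_apply, map_add, add_apply]
  abel

lemma lieBr_smul_left (hX : DifferentiableAt ℝ X z) (c : ℝ) :
    lieBr (c • X) W z = c • lieBr X W z := by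
  simp only [lieBr, fderiv_const_smul hX, Pi.smul_apply, map_smul, smul_apply, smul_sub]

end LieBracket

lemma fderiv_apply_eq_zero_of_forall_add_smul {E F : Type*} [NormedAddCommGroup E]
    [NormedSpace ℝ E] [NormedAddCommGroup F] [NormedSpace ℝ F] {X : E → F} {z v : E}
    (hX : DifferentiableAt ℝ X z) (h : ∀ t : ℝ, X (z + t • v) = X z) :
    fderiv ℝ X z v = 0 := by
  rw [← hX.lineDeriv_eq_fderiv, lineDeriv, funext h, deriv_const]

theorem hasDerivAt_dot3_lieBr {F g : ℝ × ℝ × ℝ → ℝ × ℝ × ℝ} {z lam : ℝ → ℝ × ℝ × ℝ}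
    {lam' : ℝ × ℝ × ℝ} {t₀ : ℝ} (hg : DifferentiableAt ℝ g (z t₀))
    (hz : HasDerivAt z (F (z t₀)) t₀) (hlam : HasDerivAt lam lam' t₀)
    (hlam' : ∀ v, dot3 lam' v = -dot3 (lam t₀) (fderiv ℝ F (z t₀) v)) :
    HasDerivAt (fun t => dot3 (lam t) (g (z t))) (dot3 (lam t₀) (lieBr F g (z t₀))) t₀ := by
  have hgz : HasDerivAt (fun t => g (z t)) (fderiv ℝ g (z t₀) (F (z t₀))) t₀ :=
    hg.hasFDerivAt.comp_hasDerivAt t₀ hz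
  refine (hlam.dot3 hgz).congr_deriv ?_
  rw [hlam', lieBr, dot3_sub_right]; ring

lemma differentiable_fVec (cP cI γ : ℝ) : Differentiable ℝ (fVec cP cI γ) := by
  unfold fVec; fun_prop

lemma differentiable_gPVec (β βh cP : ℝ) : Differentiable ℝ (gPVec β βh cP) := by
  unfold gPVec; fun_prop

lemma differentiable_gVVec (cV : ℝ) : Differentiable ℝ (gVVec cV) := by
  unfold gVVec; fun_prop

lemma lieBr_fVec_gVVec (cP cI γ cV : ℝ) (z : ℝ × ℝ × ℝ) :
    lieBr (fVec cP cI γ) (gVVec cV) z = 0 := by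
  have hgV_along_f : ∀ t : ℝ, gVVec cV (z + t • fVec cP cI γ z) = gVVec cV z := by
    intro t; simp [gVVec, fVec]
  have hf_along_gV : ∀ t : ℝ, fVec cP cI γ (z + t • gVVec cV z) = fVec cP cI γ z := by
    intro t; simp only [fVec, gVVec, Prod.fst_add, Prod.snd_add, Prod.smul_fst, Prod.smul_snd,
      smul_eq_mul]; ring_nf
  rw [lieBr, fderiv_apply_eq_zero_of_forall_add_smul (differentiable_gVVec cV z) hgV_along_f,
    fderiv_apply_eq_zero_of_forall_add_smul (differentiable_fVec cP cI γ z) hf_along_gV, sub_self]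

theorem siri_phiV_derivative_general
    (β βh γ cP cV cI : ℝ)
    (uP uV t₀ : ℝ)
    (z lam : ℝ → ℝ × ℝ × ℝ) (lam' : ℝ × ℝ × ℝ)
    (hz : HasDerivAt z
      (fVec cP cI γ (z t₀) + uP • gPVec β βh cP (z t₀) + uV • gVVec cV (z t₀)) t₀)
    (hlam : HasDerivAt lam lam' t₀)
    (hlam' : ∀ v : ℝ × ℝ × ℝ,
      dot3 lam' v =
        -(dot3 (lam t₀)
          (fderiv ℝ (fVec cP cI γ) (z t₀) v +
            uP • fderiv ℝ (gPVec β βh cP) (z t₀) v +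
            uV • fderiv ℝ (gVVec cV) (z t₀) v))) :
    HasDerivAt (fun t => dot3 (lam t) (gVVec cV (z t)))
      (uP * dot3 (lam t₀) (lieBr (gPVec β βh cP) (gVVec cV) (z t₀))) t₀ := by
  have hf := differentiable_fVec cP cI γ (z t₀)
  have hgP := differentiable_gPVec β βh cP (z t₀)
  have hgV := differentiable_gVVec cV (z t₀)
  have hlamF : ∀ v, dot3 lam' v = -dot3 (lam t₀)
      (fderiv ℝ (fVec cP cI γ + uP • gPVec β βh cP + uV • gVVec cV) (z t₀) v) := by
    simpa only [fderiv_add (hf.add (hgP.const_smul uP)) (hgV.const_smul uV), fderiv_add hf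
      (hgP.const_smul uP), fderiv_const_smul hgP, fderiv_const_smul hgV,
      add_apply, smul_apply] using hlam'
  have hderiv := hasDerivAt_dot3_lieBr hgV hz hlam hlamF
  rwa [lieBr_add_left (hf.add (hgP.const_smul uP)) (hgV.const_smul uV),
    lieBr_add_left hf (hgP.const_smul uP), lieBr_smul_left hgP, lieBr_smul_left hgV,
    lieBr_fVec_gVVec, lieBr_self, smul_zero, add_zero, zero_add, dot3_smul_right] at hderiv

/-- derivative of the vaccination switching function:
if `z` solves the controlled dynamics and `λ` solves the adjoint (co-state)
equation at `t₀` (the co-state derivative `lam'` is characterized against the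
standard inner product as `−(Df + u_P Dg_P + u_V Dg_V)ᵀ λ(t₀)`), then
`d/dt ⟨λ, g_V(z)⟩ = u_P ⟨λ, [g_P, g_V](z)⟩` at `t₀`. -/
theorem siri_phiV_derivative
    (β βh γ cP cV cI : ℝ)
    (hβ : 0 < β) (hβh : 0 < βh) (hγ : 0 < γ)
    (hcP : 0 < cP) (hcV : 0 < cV) (hcI : 0 < cI)
    (uP uV t₀ : ℝ)
    (z lam : ℝ → ℝ × ℝ × ℝ) (lam' : ℝ × ℝ × ℝ)
    (hz : HasDerivAt z
      (fVec cP cI γ (z t₀) + uP • gPVec β βh cP (z t₀) + uV • gVVec cV (z t₀)) t₀)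
    (hlam : HasDerivAt lam lam' t₀)
    (hlam' : ∀ v : ℝ × ℝ × ℝ,
      dot3 lam' v =
        -(dot3 (lam t₀)
          (fderiv ℝ (fVec cP cI γ) (z t₀) v +
            uP • fderiv ℝ (gPVec β βh cP) (z t₀) v +
            uV • fderiv ℝ (gVVec cV) (z t₀) v))) :
    HasDerivAt (fun t => dot3 (lam t) (gVVec cV (z t)))
      (uP * dot3 (lam t₀) (lieBr (gPVec β βh cP) (gVVec cV) (z t₀))) t₀ :=
  siri_phiV_derivative_general β βh γ cP cV cI uP uV t₀ z lam lam' hz hlam hlam'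
end
end
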